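/- Let Ω ⊂ ℝ^d be measurable, h : Ω → ℝ measurable, and suppose ρ̄ : Ω → [0,1] is a probability density such that ∫_Ω h (ρ̃ - ρ̄) ≥ 0 for every probability density ρ̃ : Ω → [0,1]. Then there exists a constant C ∈ ℝ such that ρ̄ = 1 a.e. on {h < C} and ρ̄ = 0 a.e. on {h > C}. -/

import Mathlib

/-!
If `ρ` left part of a sublevel set `{h ≤ u}` unfilled while putting mass on a superlevel set
`{h ≥ v}` with `u < v`, moving mass `m > 0` from the latter into the former would keep `ρ` an
admissible density and lower `∫ h ρ` by at least `(v - u) m`. So for all `u < v`, either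
`ρ = 1` a.e. on `{h ≤ u}` or `ρ = 0` a.e. on `{h ≥ v}`, and `C` is the supremum of the levels
`u` of the first kind. This supremum is finite: otherwise `ρ = 1` a.e. or `ρ = 0` a.e., so `∫ ρ`
would be `|Ω| > 1` or `0`.
-/

open MeasureTheory Set Filter

lemma exists_threshold {P Q : ℝ → Prop} (hP : ∀ u v, u ≤ v → P v → P u)
    (hPQ : ∀ u v, u < v → P u ∨ Q v) (hP_some : ∃ u, P u) (hP_not : ∃ w, ¬ P w) :
    ∃ C, (∀ u < C, P u) ∧ ∀ v, C < v → Q v := by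
  obtain ⟨w, hw⟩ := hP_not
  have hbdd : BddAbove {u | P u} :=
    ⟨w, fun u hu => le_of_not_ge fun hwu => hw (hP w u hwu hu)⟩
  refine ⟨sSup {u | P u}, fun u hu => ?_, fun v hv => ?_⟩
  · obtain ⟨s, hs, hus⟩ := exists_lt_of_lt_csSup hP_some hu
    exact hP u s hus.le hs
  · refine (hPQ ((sSup {u | P u} + v) / 2) v (by linarith)).resolve_left fun hmid => ?_
    have := le_csSup hbdd hmid
    linarith

noncomputable def massTransfer {E : Type*} (ρ : E → ℝ) (A B : Set E) (α β : ℝ) (x : E) : ℝ :=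
  ρ x + α * A.indicator (fun y => 1 - ρ y) x - β * B.indicator ρ x

lemma massTransfer_mem_Icc {E : Type*} {ρ : E → ℝ} {A B : Set E} {α β : ℝ}
    (hAB : Disjoint A B) (hα : α ∈ Icc (0 : ℝ) 1) (hβ : β ∈ Icc (0 : ℝ) 1) {x : E}
    (hx : ρ x ∈ Icc (0 : ℝ) 1) :
    massTransfer ρ A B α β x ∈ Icc (0 : ℝ) 1 := by
  obtain ⟨hα0, hα1⟩ := hα
  obtain ⟨hβ0, hβ1⟩ := hβ
  obtain ⟨h0, h1⟩ := hx
  by_cases hxA : x ∈ A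
  · have hxB : x ∉ B := hAB.notMem_of_mem_left hxA
    simp only [massTransfer, indicator_of_mem hxA, indicator_of_notMem hxB]
    constructor <;> nlinarith
  · by_cases hxB : x ∈ B
    · simp only [massTransfer, indicator_of_notMem hxA, indicator_of_mem hxB]
      constructor <;> nlinarith
    · simp only [massTransfer, indicator_of_notMem hxA, indicator_of_notMem hxB]
      constructor <;> linarith

section LevelSets

variable {E : Type*} [MeasurableSpace E] {μ : Measure E} {h : E → ℝ} {R : E → Prop}

lemma ae_of_forall_ae_le_imp (H : ∀ u : ℝ, ∀ᵐ x ∂μ, h x ≤ u → R x) : ∀ᵐ x ∂μ, R x := by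
  filter_upwards [ae_all_iff.2 fun n : ℕ => H n] with x hx
  obtain ⟨n, hn⟩ := exists_nat_ge (h x)
  exact hx n hn

lemma ae_of_forall_ae_ge_imp (H : ∀ v : ℝ, ∀ᵐ x ∂μ, v ≤ h x → R x) : ∀ᵐ x ∂μ, R x := by
  filter_upwards [ae_all_iff.2 fun n : ℕ => H (-n)] with x hx
  obtain ⟨n, hn⟩ := exists_nat_ge (-h x)
  exact hx n (by linarith)

lemma ae_imp_of_forall_lt {C : ℝ} (H : ∀ u < C, ∀ᵐ x ∂μ, h x ≤ u → R x) :
    ∀ᵐ x ∂μ, h x < C → R x := by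
  filter_upwards [ae_all_iff.2 fun q : ℚ => eventually_imp_distrib_left.2 (H q)] with x hx hxC
  obtain ⟨q, hxq, hqC⟩ := exists_rat_btwn hxC
  exact hx q hqC hxq.le

lemma ae_imp_of_forall_gt {C : ℝ} (H : ∀ v, C < v → ∀ᵐ x ∂μ, v ≤ h x → R x) :
    ∀ᵐ x ∂μ, C < h x → R x := by
  filter_upwards [ae_all_iff.2 fun q : ℚ => eventually_imp_distrib_left.2 (H q)] with x hx hCx
  obtain ⟨q, hCq, hqx⟩ := exists_rat_btwn hCx
  exact hx q hCq hqx.le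

end LevelSets

lemma ae_imp_eq_zero_of_setIntegral_eq_zero {E : Type*} [MeasurableSpace E] {μ : Measure E}
    {f : E → ℝ} {s : Set E} (hs : MeasurableSet s) (hf : 0 ≤ᵐ[μ.restrict s] f)
    (hfi : IntegrableOn f s μ) (h0 : ∫ x in s, f x ∂μ = 0) :
    ∀ᵐ x ∂μ, x ∈ s → f x = 0 :=
  (ae_restrict_iff' hs).1 ((setIntegral_eq_zero_iff_of_nonneg_ae hf hfi).1 h0)

structure IsAdmissibleDensity {E : Type*} [MeasurableSpace E] (μ : Measure E) (ρ : E → ℝ) :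
    Prop where
  measurable : Measurable ρ
  nonneg : ∀ᵐ x ∂μ, 0 ≤ ρ x
  le_one : ∀ᵐ x ∂μ, ρ x ≤ 1
  integral_eq_one : ∫ x, ρ x ∂μ = 1

namespace IsAdmissibleDensity

variable {E : Type*} [MeasurableSpace E] {μ : Measure E} {ρ h : E → ℝ}

lemma integrable (hρ : IsAdmissibleDensity μ ρ) : Integrable ρ μ :=
  Integrable.of_integral_ne_zero (by rw [hρ.integral_eq_one]; exact one_ne_zero)

lemma integrable_mul (hρ : IsAdmissibleDensity μ ρ) (hh : Integrable h μ) :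
    Integrable (fun x => h x * ρ x) μ :=
  hh.mul_bdd (c := 1) hρ.measurable.aestronglyMeasurable <| hρ.le_one.mp <|
    hρ.nonneg.mono fun x h0 h1 => by rw [Real.norm_eq_abs, abs_le]; constructor <;> linarith

lemma integrable_mul_one_sub (hρ : IsAdmissibleDensity μ ρ) (hh : Integrable h μ) :
    Integrable (fun x => h x * (1 - ρ x)) μ :=
  hh.mul_bdd (c := 1) (hρ.measurable.const_sub 1).aestronglyMeasurable <| hρ.le_one.mp <|
    hρ.nonneg.mono fun x h0 h1 => by rw [Real.norm_eq_abs, abs_le]; constructor <;> linarith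

lemma massTransfer_isAdmissibleDensity [IsFiniteMeasure μ] (hρ : IsAdmissibleDensity μ ρ)
    {A B : Set E} (hA : MeasurableSet A) (hB : MeasurableSet B) (hAB : Disjoint A B)
    {α β : ℝ} (hα : α ∈ Icc (0 : ℝ) 1) (hβ : β ∈ Icc (0 : ℝ) 1)
    (hmass : α * ∫ x in A, (1 - ρ x) ∂μ = β * ∫ x in B, ρ x ∂μ) :
    IsAdmissibleDensity μ (massTransfer ρ A B α β) := by
  have hbounds : ∀ᵐ x ∂μ, massTransfer ρ A B α β x ∈ Icc (0 : ℝ) 1 := by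
    filter_upwards [hρ.nonneg, hρ.le_one] with x h0 h1
    exact massTransfer_mem_Icc hAB hα hβ ⟨h0, h1⟩
  have hIA : Integrable (A.indicator fun y => 1 - ρ y) μ :=
    ((integrable_const 1).sub hρ.integrable).indicator hA
  have hIB : Integrable (B.indicator ρ) μ := hρ.integrable.indicator hB
  refine ⟨?_, hbounds.mono fun x hx => hx.1, hbounds.mono fun x hx => hx.2, ?_⟩
  · exact (hρ.measurable.add (((hρ.measurable.const_sub 1).indicator hA).const_mul α)).sub
      ((hρ.measurable.indicator hB).const_mul β)
  · have hIρA : Integrable (fun x => ρ x + α * A.indicator (fun y => 1 - ρ y) x) μ :=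
      hρ.integrable.add (hIA.const_mul α)
    simp only [massTransfer]
    rw [integral_sub hIρA (hIB.const_mul β), integral_add hρ.integrable (hIA.const_mul α),
      integral_const_mul, integral_const_mul, integral_indicator hA, integral_indicator hB,
      hmass, hρ.integral_eq_one]
    ring

lemma integral_mul_massTransfer_sub (hρ : IsAdmissibleDensity μ ρ) (hh : Integrable h μ)
    {A B : Set E} (hA : MeasurableSet A) (hB : MeasurableSet B) (α β : ℝ) :
    ∫ x, h x * (massTransfer ρ A B α β x - ρ x) ∂μ =
      α * ∫ x in A, h x * (1 - ρ x) ∂μ - β * ∫ x in B, h x * ρ x ∂μ := by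
  have hsplit : (fun x => h x * (massTransfer ρ A B α β x - ρ x)) = fun x =>
      α * A.indicator (fun y => h y * (1 - ρ y)) x - β * B.indicator (fun y => h y * ρ y) x := by
    funext x
    simp only [massTransfer, indicator_mul_right]
    ring
  rw [hsplit, integral_sub (((hρ.integrable_mul_one_sub hh).indicator hA).const_mul α)
      (((hρ.integrable_mul hh).indicator hB).const_mul β), integral_const_mul,
    integral_const_mul, integral_indicator hA, integral_indicator hB]

theorem setIntegral_one_sub_eq_zero_or_setIntegral_eq_zero [IsFiniteMeasure μ]
    (hρ : IsAdmissibleDensity μ ρ) (hh : Integrable h μ)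
    (hopt : ∀ ρt, IsAdmissibleDensity μ ρt → 0 ≤ ∫ x, h x * (ρt x - ρ x) ∂μ)
    {A B : Set E} (hA : MeasurableSet A) (hB : MeasurableSet B) {u v : ℝ} (huv : u < v)
    (hAu : ∀ x ∈ A, h x ≤ u) (hBv : ∀ x ∈ B, v ≤ h x) :
    ∫ x in A, (1 - ρ x) ∂μ = 0 ∨ ∫ x in B, ρ x ∂μ = 0 := by
  set a := ∫ x in A, (1 - ρ x) ∂μ
  set b := ∫ x in B, ρ x ∂μ
  have ha : 0 ≤ a := setIntegral_nonneg_of_ae_restrict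
    (ae_restrict_of_ae (hρ.le_one.mono fun x hx => sub_nonneg.2 hx))
  have hb : 0 ≤ b := setIntegral_nonneg_of_ae_restrict (ae_restrict_of_ae hρ.nonneg)
  by_contra! hab
  replace ha : 0 < a := ha.lt_of_ne' hab.1
  replace hb : 0 < b := hb.lt_of_ne' hab.2
  set m := min a b
  have hAB : Disjoint A B :=
    disjoint_left.2 fun x hxA hxB => (hAu x hxA).not_gt (huv.trans_le (hBv x hxB))
  have hα : m / a ∈ Icc (0 : ℝ) 1 := ⟨by positivity, (div_le_one ha).2 (min_le_left _ _)⟩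
  have hβ : m / b ∈ Icc (0 : ℝ) 1 := ⟨by positivity, (div_le_one hb).2 (min_le_right _ _)⟩
  have hmass : m / a * a = m / b * b := by
    rw [div_mul_cancel₀ _ ha.ne', div_mul_cancel₀ _ hb.ne']
  have hgain := hopt _ (hρ.massTransfer_isAdmissibleDensity hA hB hAB hα hβ hmass)
  rw [hρ.integral_mul_massTransfer_sub hh hA hB] at hgain
  have hAbound : ∫ x in A, h x * (1 - ρ x) ∂μ ≤ u * a := by
    rw [← integral_const_mul]
    refine setIntegral_mono_ae_restrict (hρ.integrable_mul_one_sub hh).integrableOn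
      (((integrable_const 1).sub hρ.integrable).const_mul u).integrableOn ?_
    filter_upwards [ae_restrict_mem hA, ae_restrict_of_ae hρ.le_one] with x hx h1
    exact mul_le_mul_of_nonneg_right (hAu x hx) (sub_nonneg.2 h1)
  have hBbound : v * b ≤ ∫ x in B, h x * ρ x ∂μ := by
    rw [← integral_const_mul]
    refine setIntegral_mono_ae_restrict (hρ.integrable.const_mul v).integrableOn
      (hρ.integrable_mul hh).integrableOn ?_
    filter_upwards [ae_restrict_mem hB, ae_restrict_of_ae hρ.nonneg] with x hx h0
    exact mul_le_mul_of_nonneg_right (hBv x hx) h0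
  have hloss : m / a * (u * a) - m / b * (v * b) = (u - v) * m := by
    field_simp
  nlinarith [mul_le_mul_of_nonneg_left hAbound hα.1, mul_le_mul_of_nonneg_left hBbound hβ.1,
    lt_min ha hb]

theorem ae_eq_one_or_ae_eq_zero [IsFiniteMeasure μ] (hρ : IsAdmissibleDensity μ ρ)
    (hhm : Measurable h) (hh : Integrable h μ)
    (hopt : ∀ ρt, IsAdmissibleDensity μ ρt → 0 ≤ ∫ x, h x * (ρt x - ρ x) ∂μ)
    {u v : ℝ} (huv : u < v) :
    (∀ᵐ x ∂μ, h x ≤ u → ρ x = 1) ∨ ∀ᵐ x ∂μ, v ≤ h x → ρ x = 0 := by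
  have hA : MeasurableSet {x | h x ≤ u} := hhm measurableSet_Iic
  have hB : MeasurableSet {x | v ≤ h x} := hhm measurableSet_Ici
  refine (hρ.setIntegral_one_sub_eq_zero_or_setIntegral_eq_zero hh hopt hA hB huv
    (fun _ hx => hx) (fun _ hx => hx)).imp (fun h0 => ?_) (fun h0 => ?_)
  · filter_upwards [ae_imp_eq_zero_of_setIntegral_eq_zero hA
      (ae_restrict_of_ae (hρ.le_one.mono fun x hx => sub_nonneg.2 hx))
      ((integrable_const 1).sub hρ.integrable).integrableOn h0] with x hx hxu
    linarith [hx hxu]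
  · filter_upwards [ae_imp_eq_zero_of_setIntegral_eq_zero hB (ae_restrict_of_ae hρ.nonneg)
      hρ.integrable.integrableOn h0] with x hx hxv using hx hxv

theorem exists_bang_bang [IsFiniteMeasure μ] (hμ : 1 < μ.real univ)
    (hρ : IsAdmissibleDensity μ ρ) (hhm : Measurable h) (hh : Integrable h μ)
    (hopt : ∀ ρt, IsAdmissibleDensity μ ρt → 0 ≤ ∫ x, h x * (ρt x - ρ x) ∂μ) :
    ∃ C : ℝ, (∀ᵐ x ∂μ, h x < C → ρ x = 1) ∧ ∀ᵐ x ∂μ, C < h x → ρ x = 0 := by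
  have hdich (u v : ℝ) (huv : u < v) := hρ.ae_eq_one_or_ae_eq_zero hhm hh hopt huv
  have hsat : ∃ u, ∀ᵐ x ∂μ, h x ≤ u → ρ x = 1 := by
    by_contra hnone
    have hzero : ∀ᵐ x ∂μ, ρ x = 0 := ae_of_forall_ae_ge_imp fun v =>
      (hdich (v - 1) v (by linarith)).resolve_left fun hsat => hnone ⟨_, hsat⟩
    have hint := hρ.integral_eq_one
    rw [integral_eq_zero_of_ae hzero] at hint
    exact zero_ne_one hint
  have hunsat : ∃ w, ¬ ∀ᵐ x ∂μ, h x ≤ w → ρ x = 1 := by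
    by_contra! hall
    have hint := hρ.integral_eq_one
    rw [integral_congr_ae (ae_of_forall_ae_le_imp hall), integral_const, smul_eq_mul,
      mul_one] at hint
    linarith
  obtain ⟨C, hlt, hgt⟩ := exists_threshold
    (fun u v huv hv => hv.mono fun x hx hxu => hx (hxu.trans huv)) hdich hsat hunsat
  exact ⟨C, ae_imp_of_forall_lt hlt, ae_imp_of_forall_gt hgt⟩

end IsAdmissibleDensity

theorem stmt_11_general {d : ℕ} (Ω : Set (EuclideanSpace ℝ (Fin d)))
    (hvol : 1 < (volume Ω).toReal)
    (h : EuclideanSpace ℝ (Fin d) → ℝ) (hmeas : Measurable h)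
    (hint : IntegrableOn h Ω)
    (ρbar : EuclideanSpace ℝ (Fin d) → ℝ) (hρmeas : Measurable ρbar)
    (hρ0 : ∀ᵐ x ∂(volume.restrict Ω), 0 ≤ ρbar x)
    (hρ1 : ∀ᵐ x ∂(volume.restrict Ω), ρbar x ≤ 1)
    (hρprob : ∫ x in Ω, ρbar x = 1)
    (hopt : ∀ ρtilde : EuclideanSpace ℝ (Fin d) → ℝ, Measurable ρtilde →
      (∀ᵐ x ∂(volume.restrict Ω), 0 ≤ ρtilde x) →
      (∀ᵐ x ∂(volume.restrict Ω), ρtilde x ≤ 1) →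
      (∫ x in Ω, ρtilde x = 1) →
      0 ≤ ∫ x in Ω, h x * (ρtilde x - ρbar x)) :
    ∃ C : ℝ, (∀ᵐ x ∂(volume.restrict Ω), h x < C → ρbar x = 1) ∧
      (∀ᵐ x ∂(volume.restrict Ω), C < h x → ρbar x = 0) := by
  have hfin : volume Ω ≠ ⊤ := fun htop => by norm_num [htop] at hvol
  have : IsFiniteMeasure (volume.restrict Ω) := isFiniteMeasure_restrict.2 hfin
  exact IsAdmissibleDensity.exists_bang_bang (by rwa [measureReal_restrict_apply_univ])
    ⟨hρmeas, hρ0, hρ1, hρprob⟩ hmeas hint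
    fun ρt hρt => hopt ρt hρt.1 hρt.2 hρt.3 hρt.4

/-- Bang-bang structure of minimizers under a density constraint: if
`∫ h (ρ̃ - ρ̄) ≥ 0` for all admissible densities `ρ̃`, then there is a level `C` such
that `ρ̄ = 1` a.e. on `{h < C}` and `ρ̄ = 0` a.e. on `{h > C}`. -/
theorem stmt_11 {d : ℕ} (Ω : Set (EuclideanSpace ℝ (Fin d)))
    (hΩ : MeasurableSet Ω) (hfin : volume Ω ≠ ⊤) (hvol : 1 < (volume Ω).toReal)
    (h : EuclideanSpace ℝ (Fin d) → ℝ) (hmeas : Measurable h)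
    (hint : IntegrableOn h Ω)
    (ρbar : EuclideanSpace ℝ (Fin d) → ℝ) (hρmeas : Measurable ρbar)
    (hρ0 : ∀ᵐ x ∂(volume.restrict Ω), 0 ≤ ρbar x)
    (hρ1 : ∀ᵐ x ∂(volume.restrict Ω), ρbar x ≤ 1)
    (hρprob : ∫ x in Ω, ρbar x = 1)
    (hopt : ∀ ρtilde : EuclideanSpace ℝ (Fin d) → ℝ, Measurable ρtilde →
      (∀ᵐ x ∂(volume.restrict Ω), 0 ≤ ρtilde x) →
      (∀ᵐ x ∂(volume.restrict Ω), ρtilde x ≤ 1) →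
      (∫ x in Ω, ρtilde x = 1) →
      0 ≤ ∫ x in Ω, h x * (ρtilde x - ρbar x)) :
    ∃ C : ℝ, (∀ᵐ x ∂(volume.restrict Ω), h x < C → ρbar x = 1) ∧
      (∀ᵐ x ∂(volume.restrict Ω), C < h x → ρbar x = 0) :=
  stmt_11_general Ω hvol h hmeas hint ρbar hρmeas hρ0 hρ1 hρprob hopt
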